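/- Let X and Y be real Banach spaces and Z = X ⊕_p Y with 1 ≤ p < ∞. Then Z has the Ball Dentable Property (BDP) if and only if X has BDP or Y has BDP. -/

import Mathlib

open Metric Topology
open scoped ENNReal

noncomputable section

/-- The ballSlice of the closed unit ball of `X` determined by the functional `f` and `α`. -/
def ballSlice (X : Type*) [NormedAddCommGroup X] [NormedSpace ℝ X]
    (f : X →L[ℝ] ℝ) (α : ℝ) : Set X :=
  {x ∈ closedBall (0 : X) 1 | 1 - α < f x}

/-- The convex combination (Minkowski sum) `∑ i, l i • S i` of the sets `S i`. -/
def combSlices {X : Type*} [NormedAddCommGroup X] [NormedSpace ℝ X]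
    {n : ℕ} (l : Fin n → ℝ) (S : Fin n → Set X) : Set X :=
  {x | ∃ v : Fin n → X, (∀ i, v i ∈ S i) ∧ x = ∑ i, l i • v i}

/-- The weak topology `σ(X, X*)` on `X`. -/
def weakTopology (X : Type*) [NormedAddCommGroup X] [NormedSpace ℝ X] :
    TopologicalSpace X :=
  ⨅ f : X →L[ℝ] ℝ, TopologicalSpace.induced f inferInstance

/-- The weak-star topology `σ(X*, X)` on the dual `X*` of `X`. -/
def wstarTopology (X : Type*) [NormedAddCommGroup X] [NormedSpace ℝ X] :
    TopologicalSpace (X →L[ℝ] ℝ) :=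
  ⨅ x : X, TopologicalSpace.induced (fun f : X →L[ℝ] ℝ => f x) inferInstance

/-- Ball Dentable Property: the closed unit ball has slices of arbitrarily small diameter. -/
def BDP (X : Type*) [NormedAddCommGroup X] [NormedSpace ℝ X] : Prop :=
  ∀ ε > 0, ∃ (f : X →L[ℝ] ℝ) (α : ℝ), ‖f‖ = 1 ∧ 0 < α ∧
    Metric.diam (ballSlice X f α) < ε

/-- Ball Huskable Property: the closed unit ball has nonempty relatively weakly open
subsets of arbitrarily small diameter. -/
def BHP (X : Type*) [NormedAddCommGroup X] [NormedSpace ℝ X] : Prop :=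
  ∀ ε > 0, ∃ U : Set X, IsOpen[weakTopology X] U ∧
    (U ∩ closedBall (0 : X) 1).Nonempty ∧
    Metric.diam (U ∩ closedBall (0 : X) 1) < ε

/-- Ball Small Combination of Slices Property: the closed unit ball has convex
combinations of slices of arbitrarily small diameter. -/
def BSCSP (X : Type*) [NormedAddCommGroup X] [NormedSpace ℝ X] : Prop :=
  ∀ ε > 0, ∃ (n : ℕ) (f : Fin n → (X →L[ℝ] ℝ)) (α l : Fin n → ℝ),
    (∀ i, ‖f i‖ = 1) ∧ (∀ i, 0 < α i) ∧ (∀ i, 0 ≤ l i) ∧ (∑ i, l i = 1) ∧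
    Metric.diam (combSlices l (fun i => ballSlice X (f i) (α i))) < ε

/-- The weak-star ballSlice of the closed unit ball of `X*` determined by `x ∈ X` and `α`. -/
def wstarSlice (X : Type*) [NormedAddCommGroup X] [NormedSpace ℝ X]
    (x : X) (α : ℝ) : Set (X →L[ℝ] ℝ) :=
  {f ∈ closedBall (0 : X →L[ℝ] ℝ) 1 | 1 - α < f x}

/-- `X*` has the weak-star Ball Dentable Property: the closed unit ball of `X*` has
weak-star slices of arbitrarily small diameter. -/
def wstarBDP (X : Type*) [NormedAddCommGroup X] [NormedSpace ℝ X] : Prop :=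
  ∀ ε > 0, ∃ (x : X) (α : ℝ), ‖x‖ = 1 ∧ 0 < α ∧
    Metric.diam (wstarSlice X x α) < ε

/-- `X*` has the weak-star Ball Huskable Property: the closed unit ball of `X*` has
nonempty relatively weak-star open subsets of arbitrarily small diameter. -/
def wstarBHP (X : Type*) [NormedAddCommGroup X] [NormedSpace ℝ X] : Prop :=
  ∀ ε > 0, ∃ U : Set (X →L[ℝ] ℝ), IsOpen[wstarTopology X] U ∧
    (U ∩ closedBall (0 : X →L[ℝ] ℝ) 1).Nonempty ∧
    Metric.diam (U ∩ closedBall (0 : X →L[ℝ] ℝ) 1) < ε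

/-- `X*` has the weak-star Ball Small Combination of Slices Property: the closed unit
ball of `X*` has convex combinations of weak-star slices of arbitrarily small diameter. -/
def wstarBSCSP (X : Type*) [NormedAddCommGroup X] [NormedSpace ℝ X] : Prop :=
  ∀ ε > 0, ∃ (n : ℕ) (x : Fin n → X) (α l : Fin n → ℝ),
    (∀ i, ‖x i‖ = 1) ∧ (∀ i, 0 < α i) ∧ (∀ i, 0 ≤ l i) ∧ (∑ i, l i = 1) ∧
    Metric.diam (combSlices l (fun i => wstarSlice X (x i) (α i))) < ε

/-- `Y` is an M-ideal in `X`: there is an L-projection on `X*` whose kernel is the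
annihilator of `Y`. -/
def IsMIdeal {X : Type*} [NormedAddCommGroup X] [NormedSpace ℝ X]
    (Y : Subspace ℝ X) : Prop :=
  ∃ P : (X →L[ℝ] ℝ) →L[ℝ] (X →L[ℝ] ℝ),
    (∀ f, P (P f) = P f) ∧
    (∀ f, ‖f‖ = ‖P f‖ + ‖f - P f‖) ∧
    (∀ f, P f = 0 ↔ ∀ y ∈ Y, f y = 0)

/-- `Y` is a strict ideal in `X`: there is a norm-one projection `P` on `X*` with kernel
the annihilator of `Y` whose range has weak-star dense unit ball in the unit ball of `X*`. -/
def IsStrictIdeal {X : Type*} [NormedAddCommGroup X] [NormedSpace ℝ X]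
    (Y : Subspace ℝ X) : Prop :=
  ∃ P : (X →L[ℝ] ℝ) →L[ℝ] (X →L[ℝ] ℝ),
    ‖P‖ = 1 ∧
    (∀ f, P (P f) = P f) ∧
    (∀ f, P f = 0 ↔ ∀ y ∈ Y, f y = 0) ∧
    closedBall (0 : X →L[ℝ] ℝ) 1 ⊆
      @closure _ (wstarTopology X) (Set.range P ∩ closedBall (0 : X →L[ℝ] ℝ) 1)

/-!
Let `F` be a norm-one functional on `Z = X ⊕_p Y` and `z` a point of a slice `S` of `B_Z`. The
map `u ↦ (‖z.fst‖ • u, z.snd)` carries the set `{u ∈ B_X | 1 - α < F (‖z.fst‖ • u, z.snd)}`,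
a nonempty slice of `B_X` by a functional of arbitrary norm, into `S`, scaling distances by
`‖z.fst‖`; likewise for `Y`. Since `‖z.fst‖ + ‖z.snd‖ ≥ F z > 1/2` on thin slices, one of
the two factors is at least `1/4`, so if the slices of `B_X` and of `B_Y` have diameters bounded
below, so do those of `B_Z`. Conversely, for `p < ∞` a point of `B_Z` whose first coordinate
has norm close to `1` has a small second coordinate, so the slice of `B_Z` cut out by
`f ∘ fst` lies close to the slice of `B_X` cut out by `f`.
-/

section BallSlice

variable {E F : Type*} [NormedAddCommGroup E] [NormedSpace ℝ E]
  [NormedAddCommGroup F] [NormedSpace ℝ F]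

@[simp]
lemma mem_ballSlice {f : E →L[ℝ] ℝ} {α : ℝ} {x : E} :
    x ∈ ballSlice E f α ↔ ‖x‖ ≤ 1 ∧ 1 - α < f x := by
  simp [ballSlice]

lemma isBounded_ballSlice (f : E →L[ℝ] ℝ) (α : ℝ) : Bornology.IsBounded (ballSlice E f α) :=
  isBounded_closedBall.subset fun _ hx => hx.1

lemma ballSlice_mono (f : E →L[ℝ] ℝ) {α β : ℝ} (h : α ≤ β) :
    ballSlice E f α ⊆ ballSlice E f β := fun _ hx =>
  ⟨hx.1, by linarith [hx.2]⟩

lemma ballSlice_nonempty {f : E →L[ℝ] ℝ} (hf : ‖f‖ = 1) {α : ℝ} (hα : 0 < α) :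
    (ballSlice E f α).Nonempty := by
  obtain ⟨x, hx, hfx⟩ := f.exists_lt_apply_of_lt_opNorm (r := 1 - α) (by linarith)
  rcases le_or_gt 0 (f x) with h | h
  · exact ⟨x, by simpa using hx.le, by rwa [Real.norm_eq_abs, abs_of_nonneg h] at hfx⟩
  · exact ⟨-x, by simpa using hx.le, by rw [Real.norm_eq_abs, abs_of_neg h] at hfx; simpa⟩

lemma ballSlice_smul (f : E →L[ℝ] ℝ) {t : ℝ} (ht : 0 < t) (α : ℝ) :
    ballSlice E (t • f) α = ballSlice E f (1 - (1 - α) / t) := by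
  ext x
  simp [div_lt_iff₀ ht, mul_comm t]

lemma ballSlice_comp_linearIsometryEquiv (e : E ≃ₗᵢ[ℝ] F) (f : F →L[ℝ] ℝ) (α : ℝ) :
    ballSlice E (f.comp (e : E →L[ℝ] F)) α = e ⁻¹' ballSlice F f α := by
  ext x
  simp

lemma diam_ballSlice_comp_linearIsometryEquiv (e : E ≃ₗᵢ[ℝ] F) (f : F →L[ℝ] ℝ) (α : ℝ) :
    diam (ballSlice E (f.comp (e : E →L[ℝ] F)) α) = diam (ballSlice F f α) := by
  rw [ballSlice_comp_linearIsometryEquiv]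
  exact e.toIsometryEquiv.diam_preimage _

lemma BDP.of_linearIsometryEquiv (e : E ≃ₗᵢ[ℝ] F) (h : BDP E) : BDP F := by
  intro ε hε
  obtain ⟨f, α, hf, hα, hdiam⟩ := h ε hε
  refine ⟨f.comp (e.symm : F →L[ℝ] E), α, by rwa [f.opNorm_comp_linearIsometryEquiv], hα, ?_⟩
  rwa [diam_ballSlice_comp_linearIsometryEquiv]

/-- Here `f` need not have norm one; for `f = 0` the set is the whole ball, whence the `2`. -/
lemma min_le_diam_ballSlice [Nontrivial E] {ε : ℝ}
    (hE : ∀ (f : E →L[ℝ] ℝ) (α : ℝ), ‖f‖ = 1 → 0 < α → ε ≤ diam (ballSlice E f α))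
    {f : E →L[ℝ] ℝ} {α : ℝ} (hne : (ballSlice E f α).Nonempty) :
    min ε 2 ≤ diam (ballSlice E f α) := by
  obtain ⟨x, hx⟩ := hne
  rw [mem_ballSlice] at hx
  by_cases hf : f = 0
  · subst hf
    have hball : ballSlice E 0 α = closedBall 0 1 := by
      ext y
      have : 1 - α < 0 := hx.2
      simp [this]
    rw [hball, diam_closedBall_eq 0 zero_le_one, mul_one]
    exact min_le_right _ _
  · have hfpos : 0 < ‖f‖ := norm_pos_iff.2 hf
    have hunit : ‖‖f‖⁻¹ • f‖ = 1 := by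
      rw [norm_smul, norm_inv, norm_norm, inv_mul_cancel₀ hfpos.ne']
    have hslice : ballSlice E f α = ballSlice E (‖f‖⁻¹ • f) (1 - (1 - α) / ‖f‖) := by
      rw [← ballSlice_smul _ hfpos, smul_inv_smul₀ hfpos.ne']
    have hlt : 1 - α < ‖f‖ := by
      calc 1 - α < f x := hx.2
        _ ≤ ‖f‖ * ‖x‖ := (le_abs_self _).trans (f.le_opNorm x)
        _ ≤ ‖f‖ := mul_le_of_le_one_right hfpos.le hx.1
    rw [hslice]
    refine (min_le_left _ _).trans (hE _ _ hunit ?_)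
    rw [sub_pos, div_lt_one hfpos]
    exact hlt

end BallSlice

namespace WithLp

variable {X Y : Type*} [NormedAddCommGroup X] [NormedAddCommGroup Y] {p : ℝ≥0∞}

lemma toLp_eq_add (x : X) (y : Y) : toLp p (x, y) = toLp p (x, 0) + toLp p (0, y) := by
  rw [← toLp_add, Prod.mk_add_mk, add_zero, zero_add]

variable [Fact (1 ≤ p)]

lemma norm_le_norm_fst_add_norm_snd (z : WithLp p (X × Y)) : ‖z‖ ≤ ‖z.fst‖ + ‖z.snd‖ := by
  calc ‖z‖ = ‖toLp p (z.fst, (0 : Y)) + toLp p ((0 : X), z.snd)‖ := by rw [← toLp_eq_add]; rfl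
    _ ≤ ‖z.fst‖ + ‖z.snd‖ := by
      grw [norm_add_le, norm_toLp_fst, norm_toLp_snd]

lemma norm_toLp_le_norm_toLp {x x' : X} (h : ‖x'‖ ≤ ‖x‖) (y : Y) :
    ‖toLp p (x', y)‖ ≤ ‖toLp p (x, y)‖ := by
  rcases eq_or_ne p ⊤ with rfl | hp
  · simp only [prod_norm_eq_sup, toLp_fst, toLp_snd]
    exact sup_le_sup_right h _
  · have hq : 0 < p.toReal := p.toReal_pos_iff_ne_top.2 hp
    simp only [prod_norm_eq_add hq, toLp_fst, toLp_snd]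
    gcongr

lemma norm_fst_rpow_add_norm_snd_rpow (hp : p ≠ ⊤) (z : WithLp p (X × Y)) :
    ‖z.fst‖ ^ p.toReal + ‖z.snd‖ ^ p.toReal = ‖z‖ ^ p.toReal := by
  have hq : 0 < p.toReal := p.toReal_pos_iff_ne_top.2 hp
  rw [prod_norm_eq_add hq, ← Real.rpow_mul (by positivity), one_div, inv_mul_cancel₀ hq.ne',
    Real.rpow_one]

lemma norm_snd_rpow_le (hp : p ≠ ⊤) {z : WithLp p (X × Y)} (hz : ‖z‖ ≤ 1) {η : ℝ} (hη : η ≤ 1)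
    (hfst : 1 - η ≤ ‖z.fst‖) : ‖z.snd‖ ^ p.toReal ≤ p.toReal * η := by
  have hq : 1 ≤ p.toReal := by
    simpa using ENNReal.toReal_mono hp (Fact.out : 1 ≤ p)
  have hbernoulli : 1 - p.toReal * η ≤ (1 - η) ^ p.toReal := by
    simpa [sub_eq_add_neg] using one_add_mul_self_le_rpow_one_add (s := -η) (by linarith) hq
  have hfst' : (1 - η) ^ p.toReal ≤ ‖z.fst‖ ^ p.toReal :=
    Real.rpow_le_rpow (by linarith) hfst (by linarith)
  have hz' : ‖z‖ ^ p.toReal ≤ 1 := Real.rpow_le_one (norm_nonneg z) hz (by linarith)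
  linarith [norm_fst_rpow_add_norm_snd_rpow hp z]

end WithLp

section LpSum

open WithLp

variable {X Y : Type*} [NormedAddCommGroup X] [NormedSpace ℝ X]
  [NormedAddCommGroup Y] [NormedSpace ℝ Y] {p : ℝ≥0∞} [Fact (1 ≤ p)]

lemma norm_comp_fstL (f : X →L[ℝ] ℝ) : ‖f.comp (fstL p ℝ X Y)‖ = ‖f‖ := by
  apply le_antisymm
  · refine (f.comp _).opNorm_le_bound (norm_nonneg f) fun z => ?_
    calc ‖f z.fst‖ ≤ ‖f‖ * ‖z.fst‖ := f.le_opNorm _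
      _ ≤ ‖f‖ * ‖z‖ := by gcongr; exact WithLp.norm_fst_le X z
  · refine f.opNorm_le_bound (norm_nonneg _) fun x => ?_
    simpa using (f.comp (fstL p ℝ X Y)).le_opNorm (toLp p (x, (0 : Y)))

lemma norm_fst_mul_min_le_diam_ballSlice {ε : ℝ}
    (hX : ∀ (f : X →L[ℝ] ℝ) (α : ℝ), ‖f‖ = 1 → 0 < α → ε ≤ diam (ballSlice X f α))
    {F : WithLp p (X × Y) →L[ℝ] ℝ} {α : ℝ} {z : WithLp p (X × Y)}
    (hz : z ∈ ballSlice _ F α) :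
    ‖z.fst‖ * min ε 2 ≤ diam (ballSlice _ F α) := by
  rcases (norm_nonneg z.fst).eq_or_lt with h0 | hr
  · rw [← h0, zero_mul]
    exact diam_nonneg
  set r := ‖z.fst‖
  have : Nontrivial X := ⟨⟨z.fst, 0, norm_pos_iff.1 hr⟩⟩
  let φ : X → WithLp p (X × Y) := fun u => toLp p (r • u, z.snd)
  let f : X →L[ℝ] ℝ := r • F.comp
    ((prodContinuousLinearEquiv p ℝ X Y).symm.toContinuousLinearMap.comp (.inl ℝ X Y))
  set c := F (toLp p (0, z.snd))
  have hf : ∀ u, f u = F (toLp p (r • u, 0)) := fun u => by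
    rw [← smul_zero r, ← Prod.smul_mk, toLp_smul, map_smul]
    rfl
  have hFφ : ∀ u, F (φ u) = f u + c := fun u => by
    rw [show φ u = _ from toLp_eq_add (r • u) z.snd, map_add, hf]
  have hS : ∀ u, u ∈ ballSlice X f (α + c) ↔ ‖u‖ ≤ 1 ∧ 1 - α < F (φ u) := fun u => by
    rw [mem_ballSlice, hFφ]
    constructor <;> rintro ⟨h1, h2⟩ <;> exact ⟨h1, by linarith⟩
  have hmaps : ∀ u ∈ ballSlice X f (α + c), φ u ∈ ballSlice _ F α := fun u hu => by
    rw [hS] at hu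
    refine mem_ballSlice.2 ⟨?_, hu.2⟩
    calc ‖φ u‖ ≤ ‖toLp p (z.fst, z.snd)‖ := by
          refine norm_toLp_le_norm_toLp ?_ _
          rw [norm_smul, Real.norm_of_nonneg hr.le]
          exact mul_le_of_le_one_right hr.le hu.1
      _ ≤ 1 := (mem_ballSlice.1 hz).1
  have hne : r⁻¹ • z.fst ∈ ballSlice X f (α + c) := by
    have : φ (r⁻¹ • z.fst) = z := by simp only [φ, smul_inv_smul₀ hr.ne']; rfl
    rw [hS, this]
    refine ⟨?_, (mem_ballSlice.1 hz).2⟩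
    rw [norm_smul, norm_inv, Real.norm_of_nonneg hr.le, inv_mul_cancel₀ hr.ne']
  have hdist : ∀ u v, dist (φ u) (φ v) = r * dist u v := fun u v => by
    rw [dist_eq_norm, dist_eq_norm, ← toLp_sub, Prod.mk_sub_mk, sub_self, ← smul_sub,
      norm_toLp_fst, norm_smul, Real.norm_of_nonneg hr.le]
  have hdiam : diam (ballSlice X f (α + c)) ≤ diam (ballSlice _ F α) / r := by
    refine diam_le_of_forall_dist_le (by positivity) fun u hu v hv => ?_
    rw [le_div_iff₀ hr, mul_comm, ← hdist]
    exact dist_le_diam_of_mem (isBounded_ballSlice _ _) (hmaps u hu) (hmaps v hv)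
  calc r * min ε 2 ≤ r * diam (ballSlice X f (α + c)) := by
        gcongr
        exact min_le_diam_ballSlice hX ⟨_, hne⟩
    _ ≤ diam (ballSlice _ F α) := by rwa [le_div_iff₀ hr, mul_comm] at hdiam

lemma norm_snd_mul_min_le_diam_ballSlice {ε : ℝ}
    (hY : ∀ (f : Y →L[ℝ] ℝ) (α : ℝ), ‖f‖ = 1 → 0 < α → ε ≤ diam (ballSlice Y f α))
    {F : WithLp p (X × Y) →L[ℝ] ℝ} {α : ℝ} {z : WithLp p (X × Y)}
    (hz : z ∈ ballSlice _ F α) :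
    ‖z.snd‖ * min ε 2 ≤ diam (ballSlice _ F α) := by
  let e := LinearIsometryEquiv.withLpProdComm p ℝ Y X
  have hz' : e.symm z ∈ ballSlice _ (F.comp (e : _ →L[ℝ] _)) α := by
    simpa [ballSlice_comp_linearIsometryEquiv] using hz
  rw [← diam_ballSlice_comp_linearIsometryEquiv e]
  exact norm_fst_mul_min_le_diam_ballSlice hY hz'

lemma BDP.left_or_right_of_withLp_prod (h : BDP (WithLp p (X × Y))) : BDP X ∨ BDP Y := by
  by_contra! hXY
  obtain ⟨hX, hY⟩ := hXY
  unfold BDP at hX hY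
  push Not at hX hY
  obtain ⟨εX, hεX, hX⟩ := hX
  obtain ⟨εY, hεY, hY⟩ := hY
  set δ := min (min εX εY) 2
  have hδ : 0 < δ := lt_min (lt_min hεX hεY) two_pos
  obtain ⟨F, α, hF, hα, hdiam⟩ := h (δ / 4) (by positivity)
  obtain ⟨z, hz⟩ := ballSlice_nonempty hF (lt_min hα one_half_pos)
  have hnorm : 1 / 2 ≤ ‖z.fst‖ + ‖z.snd‖ := by
    have hFz := (mem_ballSlice.1 hz).2
    have : F z ≤ ‖z‖ := by simpa [hF] using (le_abs_self _).trans (F.le_opNorm z)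
    linarith [min_le_right α (1 / 2), norm_le_norm_fst_add_norm_snd z]
  have hlow : δ / 4 ≤ diam (ballSlice _ F (min α (1 / 2))) := by
    rcases le_total (1 / 4) ‖z.fst‖ with hfst | hfst
    · have := norm_fst_mul_min_le_diam_ballSlice hX hz
      have : δ ≤ min εX 2 := min_le_min_right _ (min_le_left _ _)
      nlinarith
    · have := norm_snd_mul_min_le_diam_ballSlice hY hz
      have : δ ≤ min εY 2 := min_le_min_right _ (min_le_right _ _)
      nlinarith
  have hmono := diam_mono (ballSlice_mono F (min_le_left α (1 / 2))) (isBounded_ballSlice F α)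
  linarith

lemma BDP.withLp_prod_left (hp : p ≠ ⊤) (h : BDP X) : BDP (WithLp p (X × Y)) := by
  intro ε hε
  obtain ⟨f, α, hf, hα, hdiam⟩ := h (ε / 2) (by positivity)
  set q := p.toReal
  have hq : 0 < q := p.toReal_pos_iff_ne_top.2 hp
  set η := min 1 ((ε / 8) ^ q / q)
  have hη : 0 < η := lt_min one_pos (by positivity)
  have hsnd : ∀ z : WithLp p (X × Y), ‖z‖ ≤ 1 → 1 - η ≤ ‖z.fst‖ → ‖z.snd‖ ≤ ε / 8 := by
    intro z hz hfst
    refine (Real.rpow_le_rpow_iff (norm_nonneg _) (by positivity) hq).1 ?_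
    calc ‖z.snd‖ ^ q ≤ q * η := norm_snd_rpow_le hp hz (min_le_left _ _) hfst
      _ ≤ q * ((ε / 8) ^ q / q) := by gcongr; exact min_le_right _ _
      _ = (ε / 8) ^ q := mul_div_cancel₀ _ hq.ne'
  set F := f.comp (fstL p ℝ X Y)
  refine ⟨F, min α η, by rw [norm_comp_fstL, hf], lt_min hα hη, ?_⟩
  have hmem : ∀ z ∈ ballSlice _ F (min α η), z.fst ∈ ballSlice X f α ∧ ‖z.snd‖ ≤ ε / 8 := by
    intro z hz
    obtain ⟨hz1, hz2⟩ := mem_ballSlice.1 hz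
    have hfz : f z.fst ≤ ‖z.fst‖ := by
      simpa [hf] using (le_abs_self _).trans (f.le_opNorm z.fst)
    refine ⟨mem_ballSlice.2 ⟨(WithLp.norm_fst_le X z).trans hz1, ?_⟩, hsnd z hz1 ?_⟩
    · exact (sub_le_sub_left (min_le_left α η) 1).trans_lt hz2
    · exact (sub_le_sub_left (min_le_right α η) 1).trans (hz2.le.trans hfz)
  have hbound : diam (ballSlice _ F (min α η)) ≤ diam (ballSlice X f α) + ε / 4 := by
    refine diam_le_of_forall_dist_le (by positivity) fun z hz w hw => ?_
    obtain ⟨hz1, hz2⟩ := hmem z hz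
    obtain ⟨hw1, hw2⟩ := hmem w hw
    calc dist z w ≤ ‖(z - w).fst‖ + ‖(z - w).snd‖ := (dist_eq_norm z w).trans_le
          (norm_le_norm_fst_add_norm_snd _)
      _ ≤ dist z.fst w.fst + (‖z.snd‖ + ‖w.snd‖) := by
          rw [sub_fst, sub_snd, dist_eq_norm]
          gcongr
          exact norm_sub_le _ _
      _ ≤ diam (ballSlice X f α) + ε / 4 := by
          linarith [dist_le_diam_of_mem (isBounded_ballSlice f α) hz1 hw1]
  linarith

lemma BDP.withLp_prod_right (hp : p ≠ ⊤) (h : BDP Y) : BDP (WithLp p (X × Y)) :=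
  (BDP.withLp_prod_left hp h).of_linearIsometryEquiv (LinearIsometryEquiv.withLpProdComm p ℝ Y X)

end LpSum

theorem bdp_prod_lp_iff_general (X Y : Type*)
    [NormedAddCommGroup X] [NormedSpace ℝ X]
    [NormedAddCommGroup Y] [NormedSpace ℝ Y]
    (p : ℝ≥0∞) [Fact (1 ≤ p)] (hp : p ≠ ⊤) :
    BDP (WithLp p (X × Y)) ↔ (BDP X ∨ BDP Y) :=
  ⟨BDP.left_or_right_of_withLp_prod,
    fun h => h.elim (BDP.withLp_prod_left hp) (BDP.withLp_prod_right hp)⟩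

/-- `Z = X ⊕_p Y` (`1 ≤ p < ∞`) has the Ball Dentable Property if and only
if `X` has it or `Y` has it. -/
theorem bdp_prod_lp_iff (X Y : Type*)
    [NormedAddCommGroup X] [NormedSpace ℝ X] [CompleteSpace X]
    [NormedAddCommGroup Y] [NormedSpace ℝ Y] [CompleteSpace Y]
    (p : ℝ≥0∞) [Fact (1 ≤ p)] (hp : p ≠ ⊤) :
    BDP (WithLp p (X × Y)) ↔ (BDP X ∨ BDP Y) :=
  bdp_prod_lp_iff_general X Y p hp
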